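/- Let α = [0;1+d₁,\overline{d₂,…,dₙ}] be a Sturm number of type (i) (dₙ ≥ d₁ ≥ 1) and let σ be its associated standard morphism. Then c_α = lim_{m→∞} σ^m(a) = σ^ω(a); that is, c_α is generated by the standard morphism σ from the letter a. -/

import Mathlib

/-- The two-letter alphabet 𝒜 = {a, b}. -/
inductive AB : Type
  | a : AB
  | b : AB
deriving DecidableEq, Repr

/-- Apply a morphism (determined by its images on the letters) to a finite word. -/
def applyM (g : AB → List AB) (w : List AB) : List AB := w.flatMap g

/-- The exchange morphism E : a ↦ b, b ↦ a. -/
def Em : AB → List AB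
  | AB.a => [AB.b]
  | AB.b => [AB.a]

/-- The morphism φ : a ↦ ab, b ↦ a. -/
def phim : AB → List AB
  | AB.a => [AB.a, AB.b]
  | AB.b => [AB.a]

/-- Composition of morphisms: `compM g h` applies `h` first, then `g`. -/
def compM (g h : AB → List AB) : AB → List AB := fun c => applyM g (h c)

/-- Powers of a morphism. -/
def mpow (g : AB → List AB) : ℕ → AB → List AB
  | 0 => fun c => [c]
  | n + 1 => compM g (mpow g n)

/-- A morphism is standard iff it is a composition of E and φ (in any number and order). -/
inductive IsStandard : (AB → List AB) → Prop
  | id : IsStandard (fun c => [c])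
  | compE {ψ : AB → List AB} : IsStandard ψ → IsStandard (compM ψ Em)
  | compPhi {ψ : AB → List AB} : IsStandard ψ → IsStandard (compM ψ phim)

/-- `IsRightConj ψ ξ k` : ξ is the k-th right conjugate of ψ, i.e. there is a word u
of length k with ψ(w)u = uξ(w) for all finite words w. -/
def IsRightConj (ψ ξ : AB → List AB) (k : ℕ) : Prop :=
  ∃ u : List AB, u.length = k ∧ ∀ w : List AB, applyM ψ w ++ u = u ++ applyM ξ w

/-- w^k (power of a finite word under concatenation). -/
def lpow (w : List AB) : ℕ → List AB
  | 0 => []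
  | k + 1 => w ++ lpow w k

/-- Standard sequence associated with a directive sequence (d₁, d₂, …) (here `d`
is indexed so that `d i` is dᵢ for i ≥ 1): `sseq d 0 = s₋₁ = b`, `sseq d (n+1) = sₙ`,
with s₀ = a and sₙ = sₙ₋₁^{dₙ} sₙ₋₂. -/
def sseq (d : ℕ → ℕ) : ℕ → List AB
  | 0 => [AB.b]
  | 1 => [AB.a]
  | n + 2 => lpow (sseq d (n + 1)) (d (n + 1)) ++ sseq d n

/-- Convergent denominators: `qseq d n` = qₙ = |sₙ| (q₀ = 1, q₁ = 1 + d₁,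
qₙ = dₙqₙ₋₁ + qₙ₋₂). -/
def qseq (d : ℕ → ℕ) : ℕ → ℕ
  | 0 => 1
  | 1 => 1 + d 1
  | n + 2 => d (n + 2) * qseq d (n + 1) + qseq d n

/-- `PrefInf u x` : the finite word u is a prefix of the infinite word x. -/
def PrefInf (u : List AB) (x : ℕ → AB) : Prop :=
  ∀ i, i < u.length → u.getD i AB.a = x i

/-- Image of an infinite word under a (non-erasing) morphism, letter by letter. -/
def applyInf (g : AB → List AB) (x : ℕ → AB) : ℕ → AB :=
  fun i => (applyM g ((List.range (i + 1)).map x)).getD i AB.a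

/-- `IsProdInf u x` : the infinite word x is the infinite product u 0 · u 1 · u 2 ⋯,
i.e. every finite partial product is a prefix of x. -/
def IsProdInf (u : ℕ → List AB) (x : ℕ → AB) : Prop :=
  ∀ n, PrefInf (((List.range n).map u).flatten) x

/-- Adjoining singular words: `vword d k` is the adjoining singular word v_{k-1}
(so `vword d 0 = v₋₁`), where vₙ = a·sₙ₊₁^{d_{n+2}−1}sₙ·b⁻¹ for n odd and
vₙ = b·sₙ₊₁^{d_{n+2}−1}sₙ·a⁻¹ for n even. -/
def vword (d : ℕ → ℕ) (k : ℕ) : List AB :=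
  (if k % 2 = 0 then AB.a else AB.b) ::
    (lpow (sseq d (k + 1)) (d (k + 1) - 1) ++ sseq d k).dropLast

/-- Singular words: `wword d k` is the singular word w_{k-2}
(w₋₂ = ε, w₋₁ = a, w₀ = b, and wₙ = a·sₙ·b⁻¹ for n ≥ 1 odd, wₙ = b·sₙ·a⁻¹ for n even). -/
def wword (d : ℕ → ℕ) : ℕ → List AB
  | 0 => []
  | 1 => [AB.a]
  | 2 => [AB.b]
  | k + 3 =>
      (if (k + 1) % 2 = 1 then AB.a else AB.b) :: (sseq d (k + 2)).dropLast

/-- The standard morphism σ associated with a type (i) Sturm number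
α = [0;1+d₁,\overline{d₂,…,dₙ}] : σ(a) = sₙ₋₁, σ(b) = sₙ₋₁^{dₙ−d₁} sₙ₋₂. -/
def sigmaGen (d : ℕ → ℕ) (n : ℕ) : AB → List AB
  | AB.a => sseq d n
  | AB.b => lpow (sseq d n) (d n - d 1) ++ sseq d (n - 1)

/-- The directive sequence of α = [0;2,\overline{r}] : d₁ = 1, dᵢ = r for i ≥ 2. -/
def dseq (r : ℕ) : ℕ → ℕ := fun i => if i ≤ 1 then 1 else r

/-- The directive sequence of 1 − α = [0;1,d₁,\overline{d₂,…,dₙ}] obtained from that of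
α = [0;1+d₁,\overline{d₂,…,dₙ}] : ê₁ = 0 and êᵢ = dᵢ₋₁ for i ≥ 2. -/
def dhat (d : ℕ → ℕ) : ℕ → ℕ := fun i => if i ≤ 1 then 0 else d (i - 1)

/-- `Generates ψ c x` : ψ is prolongable on the letter c and x = ψ^ω(c), i.e. every
ψ^m(c) is a prefix of x. -/
def Generates (ψ : AB → List AB) (c : AB) (x : ℕ → AB) : Prop :=
  (∃ w : List AB, w ≠ [] ∧ ψ c = c :: w) ∧ ∀ m, PrefInf (mpow ψ m c) x

/-- Fibonacci numbers, shifted: `fibw k = F_{k-1}`, so fibw 0 = F₋₁ = 1,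
fibw 1 = F₀ = 1, Fₙ = Fₙ₋₁ + Fₙ₋₂. -/
def fibw : ℕ → ℕ
  | 0 => 1
  | 1 => 1
  | n + 2 => fibw (n + 1) + fibw n

/-- `HasCF γ a` : γ has continued fraction expansion [0; a 1, a 2, a 3, …]. -/
def HasCF (γ : ℝ) (a : ℕ → ℕ) : Prop :=
  ∃ x : ℕ → ℝ, x 0 = γ ∧ (∀ i, 0 < x i ∧ x i < 1) ∧
    ∀ i, 1 / x i = (a (i + 1) : ℝ) + x (i + 1)

/-- γ has a continued fraction expansion of type (i):
γ = [0;1+d₁,\overline{d₂,…,dₙ}] < 1/2 with dₙ ≥ d₁ ≥ 1. -/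
def CFTypeI (γ : ℝ) : Prop :=
  ∃ a : ℕ → ℕ, HasCF γ a ∧ γ < 1 / 2 ∧
    ∃ n : ℕ, 2 ≤ n ∧ ∃ d : ℕ → ℕ,
      (∀ i, 1 ≤ i → 1 ≤ d i) ∧ a 1 = 1 + d 1 ∧ (∀ i, 2 ≤ i → a i = d i) ∧
      (∀ i, 2 ≤ i → d (i + (n - 1)) = d i) ∧ d 1 ≤ d n

/-- γ has a continued fraction expansion of type (ii):
γ = [0;1,d₁,\overline{d₂,…,dₙ}] > 1/2 with dₙ ≥ d₁. -/
def CFTypeII (γ : ℝ) : Prop :=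
  ∃ a : ℕ → ℕ, HasCF γ a ∧ 1 / 2 < γ ∧
    ∃ n : ℕ, 2 ≤ n ∧ ∃ d : ℕ → ℕ,
      (∀ i, 1 ≤ i → 1 ≤ d i) ∧ a 1 = 1 ∧ (∀ i, 2 ≤ i → a i = d (i - 1)) ∧
      (∀ i, 2 ≤ i → d (i + (n - 1)) = d i) ∧ d 1 ≤ d n

/-- A Sturm number: an irrational γ ∈ (0,1) whose continued fraction expansion is of
type (i) or type (ii). -/
def IsSturmNumber (γ : ℝ) : Prop :=
  Irrational γ ∧ 0 < γ ∧ γ < 1 ∧ (CFTypeI γ ∨ CFTypeII γ)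

/-!
Since σ(a) = sₙ₋₁ and σ(b) = sₙ₋₁^{dₙ−d₁}sₙ₋₂, we get σ(s₀) = sₙ₋₁ and
σ(s₁) = σ(a^{d₁}b) = sₙ₋₁^{dₙ}sₙ₋₂ = sₙ; as σ is a morphism and the partial quotients are
(n−1)-periodic from d₂ on, the recursion sₖ = sₖ₋₁^{dₖ}sₖ₋₂ is carried to
σ(sₖ) = sₖ₊ₙ₋₁ for every k. Hence σ^m(a) = s_{m(n−1)}, a prefix of c_α, and σ is prolongable
on a because sₙ₋₁ begins with a and has length at least 2.
-/

lemma applyM_append (g : AB → List AB) (u v : List AB) :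
    applyM g (u ++ v) = applyM g u ++ applyM g v :=
  List.flatMap_append

lemma applyM_singleton (g : AB → List AB) (x : AB) : applyM g [x] = g x := by
  simp [applyM]

lemma lpow_add (w : List AB) (j k : ℕ) : lpow w (j + k) = lpow w j ++ lpow w k := by
  induction j with
  | zero => simp [lpow]
  | succ j ih => rw [Nat.add_right_comm, lpow, lpow, ih, List.append_assoc]

lemma applyM_lpow (g : AB → List AB) (w : List AB) (k : ℕ) :
    applyM g (lpow w k) = lpow (applyM g w) k := by
  induction k with
  | zero => rfl
  | succ k ih => rw [lpow, lpow, applyM_append, ih]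

lemma mpow_eq_of_applyM_eq {g : AB → List AB} {c : AB} {u : ℕ → List AB} {p : ℕ}
    (h0 : u 0 = [c]) (h : ∀ k, applyM g (u k) = u (k + p)) (m : ℕ) :
    mpow g m c = u (m * p) := by
  induction m with
  | zero => rw [Nat.zero_mul, h0]; rfl
  | succ m ih =>
    change applyM g (mpow g m c) = _
    rw [ih, h, Nat.succ_mul]

section StandardSequence

variable {d : ℕ → ℕ}

lemma sseq_zero : sseq d 0 = [AB.b] :=
  rfl

lemma sseq_one : sseq d 1 = [AB.a] :=
  rfl

lemma sseq_add_two (k : ℕ) :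
    sseq d (k + 2) = lpow (sseq d (k + 1)) (d (k + 1)) ++ sseq d k :=
  rfl

lemma sseq_prefix_sseq_succ {k : ℕ} (hk : 1 ≤ d (k + 1)) :
    sseq d (k + 1) <+: sseq d (k + 2) := by
  obtain ⟨j, hj⟩ := Nat.exists_eq_add_of_le' hk
  rw [sseq_add_two, hj, lpow, List.append_assoc]
  exact List.prefix_append _ _

lemma sseq_two_prefix (hd : ∀ i, 2 ≤ i → 1 ≤ d i) (k : ℕ) : sseq d 2 <+: sseq d (k + 2) := by
  induction k with
  | zero => exact List.prefix_refl _
  | succ k ih => exact ih.trans (sseq_prefix_sseq_succ (hd (k + 2) (by omega)))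

lemma exists_sseq_eq_cons (hd : ∀ i, 1 ≤ i → 1 ≤ d i) {k : ℕ} (hk : 2 ≤ k) :
    ∃ w, w ≠ [] ∧ sseq d k = AB.a :: w := by
  obtain ⟨k, rfl⟩ := Nat.exists_eq_add_of_le' hk
  obtain ⟨t, ht⟩ := sseq_two_prefix (fun i hi => hd i (by omega)) k
  obtain ⟨j, hj⟩ := Nat.exists_eq_add_of_le' (hd 1 le_rfl)
  refine ⟨lpow [AB.a] j ++ [AB.b] ++ t, by simp, ?_⟩
  rw [← ht, sseq_add_two, hj]
  rfl

theorem applyM_sigmaGen_sseq {n : ℕ} (hn : 2 ≤ n)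
    (hper : ∀ i, 2 ≤ i → d (i + (n - 1)) = d i) (hdn : d 1 ≤ d n) :
    ∀ k, applyM (sigmaGen d n) (sseq d (k + 1)) = sseq d (k + n)
  | 0 => by rw [Nat.zero_add n, Nat.zero_add, sseq_one, applyM_singleton]; rfl
  | 1 => by
    obtain ⟨p, rfl⟩ := Nat.exists_eq_add_of_le' hn
    rw [show 1 + (p + 2) = p + 1 + 2 by omega, sseq_add_two 0, sseq_add_two (p + 1),
      applyM_append, applyM_lpow, Nat.zero_add, sseq_one, sseq_zero, applyM_singleton,
      applyM_singleton]
    change lpow (sseq d (p + 2)) (d 1) ++ (lpow (sseq d (p + 2)) (d (p + 2) - d 1)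
      ++ sseq d (p + 1)) = _
    rw [← List.append_assoc, ← lpow_add, Nat.add_sub_cancel' hdn]
  | k + 2 => by
    obtain ⟨p, rfl⟩ := Nat.exists_eq_add_of_le' hn
    have hperiod : d (k + p + 3) = d (k + 2) := by
      have h := hper (k + 2) (by omega)
      rwa [show k + 2 + (p + 2 - 1) = k + p + 3 by omega] at h
    rw [sseq_add_two (k + 1), applyM_append, applyM_lpow,
      applyM_sigmaGen_sseq hn hper hdn (k + 1), applyM_sigmaGen_sseq hn hper hdn k,
      show k + 2 + (p + 2) = k + p + 2 + 2 by omega, sseq_add_two (k + p + 2),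
      show k + 1 + (p + 2) = k + p + 2 + 1 by omega, hperiod]
    rfl

end StandardSequence

/-- For a type (i) Sturm number α = [0;1+d₁,\overline{d₂,…,dₙ}]
(dₙ ≥ d₁ ≥ 1), c_α = σ^ω(a): σ is prolongable on a and every σ^m(a) is a prefix
of c_α (c_α being the infinite word with every sₖ as a prefix). -/
theorem statement7 (n : ℕ) (hn : 2 ≤ n) (d : ℕ → ℕ)
    (hd : ∀ i, 1 ≤ i → 1 ≤ d i)
    (hper : ∀ i, 2 ≤ i → d (i + (n - 1)) = d i)
    (hdn : d 1 ≤ d n)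
    (c : ℕ → AB) (hc : ∀ k, PrefInf (sseq d (k + 1)) c) :
    Generates (sigmaGen d n) AB.a c := by
  refine ⟨exists_sseq_eq_cons hd hn, fun m => ?_⟩
  have hσ : ∀ k, applyM (sigmaGen d n) (sseq d (k + 1)) = sseq d (k + (n - 1) + 1) := by
    intro k
    rw [applyM_sigmaGen_sseq hn hper hdn, Nat.add_assoc, Nat.sub_add_cancel (by omega)]
  rw [mpow_eq_of_applyM_eq (u := fun k => sseq d (k + 1)) rfl hσ]
  exact hc _
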